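/- Let A be strictly positive selfadjoint, f : σ(A) → [0,∞) continuous, 𝒜 as above, and 𝒵 = {s ∈ σ(A) : f(s) = 0}. Then the intersection of σ(𝒜) \ {0} with the imaginary axis iℝ equals ⋃_{s ∈ 𝒵} {i√s, −i√s}. -/

import Mathlib

open MeasureTheory Filter Complex

noncomputable section

variable {Ω : Type*} [MeasurableSpace Ω]

/-- `∫ a |u|²`: the squared `H¹ = D(A^{1/2})`-seminorm in the
multiplication-operator model of the spectral theorem, where `A` acts as
multiplication by `a`. -/
def aInt (μ : Measure Ω) (a : Ω → ℝ) (u : Ω → ℂ) : ENNReal :=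
  ∫⁻ ω, ENNReal.ofReal (a ω * ‖u ω‖ ^ 2) ∂μ

/-- Membership in `H¹ = D(A^{1/2})`. -/
def memH1 (μ : Measure Ω) (a : Ω → ℝ) (u : Ω → ℂ) : Prop :=
  MemLp u 2 μ ∧ aInt μ a u < ⊤

/-- Membership in the domain of the generator `𝒜(u,v) = (v, -Au - f(A)v)`:
`u, v ∈ H¹` and `Au + f(A)v ∈ H`. -/
def memDom (μ : Measure Ω) (a : Ω → ℝ) (f : ℝ → ℝ) (u v : Ω → ℂ) : Prop :=
  memH1 μ a u ∧ memH1 μ a v ∧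
    MemLp (fun ω => (a ω : ℂ) * u ω + (f (a ω) : ℂ) * v ω) 2 μ

/-- Squared norm in the phase space `ℋ = H¹ × H`. -/
def hsq (μ : Measure Ω) (a : Ω → ℝ) (u v : Ω → ℂ) : ENNReal :=
  aInt μ a u + ∫⁻ ω, ENNReal.ofReal (‖v ω‖ ^ 2) ∂μ

/-- `ξ` belongs to the resolvent set of `𝒜`: the equation `ξ z - 𝒜 z = ẑ` has,
for every `ẑ ∈ ℋ`, a unique solution `z ∈ D(𝒜)`, depending boundedly on `ẑ`. -/
def resSet (μ : Measure Ω) (a : Ω → ℝ) (f : ℝ → ℝ) (ξ : ℂ) : Prop :=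
  ∃ C : ℝ, ∀ uh vh : Ω → ℂ, memH1 μ a uh → MemLp vh 2 μ →
    ∃ u v : Ω → ℂ, memDom μ a f u v ∧
      (fun ω => ξ * u ω - v ω) =ᵐ[μ] uh ∧
      (fun ω => ξ * v ω + ((a ω : ℂ) * u ω + (f (a ω) : ℂ) * v ω)) =ᵐ[μ] vh ∧
      hsq μ a u v ≤ ENNReal.ofReal C * hsq μ a uh vh ∧
      ∀ u' v' : Ω → ℂ, memDom μ a f u' v' →
        (fun ω => ξ * u' ω - v' ω) =ᵐ[μ] uh →
        (fun ω => ξ * v' ω + ((a ω : ℂ) * u' ω + (f (a ω) : ℂ) * v' ω)) =ᵐ[μ] vh →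
        u' =ᵐ[μ] u ∧ v' =ᵐ[μ] v

/-- The set `Λ` of positive limits of `f(sₙ)/sₙ` along sequences `sₙ → ∞` in `σ`. -/
def limSet (σS : Set ℝ) (f : ℝ → ℝ) : Set ℝ :=
  {ℓ : ℝ | 0 < ℓ ∧ ∃ s : ℕ → ℝ, (∀ n, s n ∈ σS) ∧ Tendsto s atTop atTop ∧
    Tendsto (fun n => f (s n) / s n) atTop (nhds ℓ)}

/-!
In the multiplication-operator model the resolvent equation decouples over the spectral values
`s = a ω`: with `v = ξ u - û` it reads `(ξ² + f(s) ξ + s) u = v̂ + (ξ + f(s)) û`. For `ξ = iτ`,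
`|ξ² + f(s) ξ + s|² = (s - τ²)² + τ² f(s)²`, which vanishes only at `s = τ²` with `f(s) = 0`.

If there is no such point in `σ(A)`, continuity of `f` on the compact set `σ(A) ∩ [0, 2τ² + 1]`
and the growth of `(s - τ²)²` beyond it give `|ξ² + f(s) ξ + s|² ≥ c s`, and dividing by the
polynomial gives a bounded inverse of `ξ - 𝒜`. If there is one, `s₁`, the polynomial is small
near `s₁`, and the indicator of a set of finite positive measure on which `a` is close to `s₁`
is an approximate eigenvector: the corresponding `v` is larger than any prescribed bound.
-/

open Set

/-- The polynomial `ξ² + f(s) ξ + s`, whose roots `ξ_s^±` for `s ∈ σ(A)` lie in `σ(𝒜)`. -/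
def symbol (f : ℝ → ℝ) (ξ : ℂ) (s : ℝ) : ℂ := ξ ^ 2 + ξ * f s + s

section Symbol

variable {f : ℝ → ℝ} {ξ : ℂ}

lemma norm_symbol_sq (hre : ξ.re = 0) (s : ℝ) :
    ‖symbol f ξ s‖ ^ 2 = (s - ξ.im ^ 2) ^ 2 + ξ.im ^ 2 * f s ^ 2 := by
  rw [← normSq_eq_norm_sq, normSq_apply]
  simp only [symbol, add_re, add_im, mul_re, mul_im, pow_two, ofReal_re, ofReal_im, hre]
  ring

lemma sq_eq_neg_ofReal_iff {s : ℝ} (hs : 0 ≤ s) :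
    ξ ^ 2 = -(s : ℂ) ↔ ξ = I * (Real.sqrt s : ℂ) ∨ ξ = -(I * (Real.sqrt s : ℂ)) := by
  have h : -(s : ℂ) = (I * (Real.sqrt s : ℂ)) ^ 2 := by
    rw [mul_pow, I_sq, ← ofReal_pow, Real.sq_sqrt hs]; ring
  rw [h, sq_eq_sq_iff_eq_or_eq_neg]

lemma symbol_eq_zero_iff (hre : ξ.re = 0) (hξ : ξ ≠ 0) {s : ℝ} :
    symbol f ξ s = 0 ↔ f s = 0 ∧ ξ ^ 2 = -(s : ℂ) := by
  have him : ξ.im ≠ 0 := fun h => hξ (Complex.ext hre h)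
  have hsq : ξ ^ 2 = -((ξ.im ^ 2 : ℝ) : ℂ) := by
    apply Complex.ext <;> simp [pow_two, hre]
  rw [← norm_eq_zero, ← sq_eq_zero_iff, norm_symbol_sq hre,
    add_eq_zero_iff_of_nonneg (sq_nonneg _) (by positivity), hsq, neg_inj, ofReal_inj]
  simp [him, sub_eq_zero, eq_comm, and_comm]

lemma symbol_mul_eq_iff {u v uh vh : ℂ} {s : ℝ} (h : ξ * u - v = uh) :
    ξ * v + (s * u + f s * v) = vh ↔ symbol f ξ s * u = vh + (ξ + f s) * uh := by
  rw [symbol, ← h]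
  constructor <;> intro h' <;> linear_combination h'

lemma ContinuousWithinAt.symbol {σS : Set ℝ} {s : ℝ} (hf : ContinuousWithinAt f σS s) :
    ContinuousWithinAt (symbol f ξ) σS s := by
  unfold _root_.symbol
  fun_prop

lemma ContinuousOn.symbol {σS : Set ℝ} (hf : ContinuousOn f σS) :
    ContinuousOn (symbol f ξ) σS :=
  fun s hs => (hf s hs).symbol

lemma exists_pos_mul_le_norm_symbol_sq {σS : Set ℝ} (hcl : IsClosed σS)
    (hfc : ContinuousOn f σS) (hre : ξ.re = 0) (hroot : ∀ s ∈ σS, symbol f ξ s ≠ 0) :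
    ∃ c > 0, ∀ s ∈ σS, c * s ≤ ‖symbol f ξ s‖ ^ 2 := by
  set L := 2 * ξ.im ^ 2 + 1
  have hL0 : 0 < L := by positivity
  obtain ⟨m, hm, hmK⟩ := (isCompact_Icc.inter_left hcl : IsCompact (σS ∩ Icc 0 L)).exists_forall_le'
    ((hfc.symbol (ξ := ξ)).norm.pow 2 |>.mono inter_subset_left) (a := 0)
    (fun s hs => pow_pos (norm_pos_iff.mpr (hroot s hs.1)) 2)
  have hc : 0 < min (m / L) (1 / 4) := lt_min (div_pos hm hL0) (by norm_num)
  refine ⟨_, hc, fun s hs => ?_⟩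
  have hQ : (s - ξ.im ^ 2) ^ 2 ≤ ‖symbol f ξ s‖ ^ 2 := by
    rw [norm_symbol_sq hre]; nlinarith [sq_nonneg (ξ.im * f s)]
  rcases lt_or_ge s 0 with hneg | hnn
  · nlinarith [sq_nonneg ‖symbol f ξ s‖]
  rcases le_or_gt s L with hle | hgt
  · calc min (m / L) (1 / 4) * s ≤ m / L * L := by gcongr; exact min_le_left _ _
      _ = m := div_mul_cancel₀ m hL0.ne'
      _ ≤ ‖symbol f ξ s‖ ^ 2 := hmK s ⟨hs, hnn, hle⟩
  · calc min (m / L) (1 / 4) * s ≤ 1 / 4 * s := by gcongr; exact min_le_right _ _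
      _ ≤ (s - ξ.im ^ 2) ^ 2 := by nlinarith
      _ ≤ ‖symbol f ξ s‖ ^ 2 := hQ

end Symbol

lemma mul_sq_le_of_mul_sq_le {s D c s₀ t F X U Uh Vh : ℝ} (hc : 0 < c) (hs₀ : 0 < s₀)
    (ht : 0 < t) (hs : s₀ ≤ s) (hcD : c * s ≤ D) (htD : t * F ^ 2 ≤ D)
    (hU : D * U ^ 2 ≤ (Vh + (X + F) * Uh) ^ 2) :
    s * U ^ 2 ≤ 3 * (1 / c + X ^ 2 / (c * s₀) + 1 / t) * (s * Uh ^ 2 + Vh ^ 2) := by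
  have hsp : 0 < s := hs₀.trans_le hs
  have hD : 0 < D := (mul_pos hc hsp).trans_le hcD
  have hUh : Uh ^ 2 ≤ s / s₀ * Uh ^ 2 :=
    le_mul_of_one_le_left (sq_nonneg _) ((one_le_div hs₀).mpr hs)
  calc s * U ^ 2 = s * (D * U ^ 2) / D := by field_simp
    _ ≤ s * (3 * (Vh ^ 2 + X ^ 2 * Uh ^ 2 + F ^ 2 * Uh ^ 2)) / D := by
        gcongr s * ?_ / D
        refine hU.trans ?_
        nlinarith [sq_nonneg (Vh - X * Uh), sq_nonneg (Vh - F * Uh), sq_nonneg (X * Uh - F * Uh)]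
    _ = 3 * (s / D * Vh ^ 2 + s / D * X ^ 2 * Uh ^ 2 + F ^ 2 / D * (s * Uh ^ 2)) := by ring
    _ ≤ 3 * (1 / c * Vh ^ 2 + 1 / c * X ^ 2 * (s / s₀ * Uh ^ 2) + 1 / t * (s * Uh ^ 2)) := by
        have hsD : s / D ≤ 1 / c := by rw [div_le_div_iff₀ hD hc]; linarith
        have hFD : F ^ 2 / D ≤ 1 / t := by rw [div_le_div_iff₀ hD ht]; linarith
        gcongr
    _ = 3 * (1 / c * Vh ^ 2 + X ^ 2 / (c * s₀) * (s * Uh ^ 2) + 1 / t * (s * Uh ^ 2)) := by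
        field_simp
    _ ≤ 3 * (1 / c + X ^ 2 / (c * s₀) + 1 / t) * (s * Uh ^ 2 + Vh ^ 2) := by
        have : 0 ≤ 1 / c * (s * Uh ^ 2) + X ^ 2 / (c * s₀) * Vh ^ 2 + 1 / t * Vh ^ 2 := by
          positivity
        nlinarith

lemma norm_resolvent_sq_le {f : ℝ → ℝ} {ξ u uh vh : ℂ} {s c s₀ : ℝ} (hre : ξ.re = 0)
    (hξ : ξ ≠ 0) (hc : 0 < c) (hs₀ : 0 < s₀) (hs : s₀ ≤ s) (hcs : c * s ≤ ‖symbol f ξ s‖ ^ 2)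
    (hu : symbol f ξ s * u = vh + (ξ + f s) * uh) :
    s * ‖u‖ ^ 2 + ‖ξ * u - uh‖ ^ 2 ≤
      (3 * (1 / c + ‖ξ‖ ^ 2 / (c * s₀) + 1 / ‖ξ‖ ^ 2) * (1 + 2 * ‖ξ‖ ^ 2 / s₀) + 2 / s₀) *
        (s * ‖uh‖ ^ 2 + ‖vh‖ ^ 2) := by
  have hX : ‖ξ‖ ^ 2 = ξ.im ^ 2 := by
    rw [← normSq_eq_norm_sq, normSq_apply, hre]; ring
  have hss : 1 ≤ s / s₀ := (one_le_div hs₀).mpr hs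
  have hu_bound := mul_sq_le_of_mul_sq_le hc hs₀ (pow_pos (norm_pos_iff.mpr hξ) 2) hs hcs
    (F := |f s|) (X := ‖ξ‖) (U := ‖u‖) (Uh := ‖uh‖) (Vh := ‖vh‖)
    (by rw [sq_abs, hX, norm_symbol_sq hre]; nlinarith [sq_nonneg (s - ξ.im ^ 2)])
    (by
      rw [← mul_pow, ← norm_mul, hu]
      gcongr
      calc ‖vh + (ξ + f s) * uh‖ ≤ ‖vh‖ + (‖ξ‖ + ‖(f s : ℂ)‖) * ‖uh‖ := by
            grw [norm_add_le, norm_mul, norm_add_le]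
        _ = ‖vh‖ + (‖ξ‖ + |f s|) * ‖uh‖ := by rw [norm_real, Real.norm_eq_abs])
  have hv_bound : ‖ξ * u - uh‖ ^ 2 ≤ 2 * ‖ξ‖ ^ 2 / s₀ * (s * ‖u‖ ^ 2) + 2 / s₀ * (s * ‖uh‖ ^ 2) :=
    calc ‖ξ * u - uh‖ ^ 2 ≤ (‖ξ‖ * ‖u‖ + ‖uh‖) ^ 2 := by
          gcongr; grw [norm_sub_le, norm_mul]
      _ ≤ 2 * ‖ξ‖ ^ 2 * ‖u‖ ^ 2 + 2 * ‖uh‖ ^ 2 := by nlinarith [sq_nonneg (‖ξ‖ * ‖u‖ - ‖uh‖)]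
      _ ≤ 2 * ‖ξ‖ ^ 2 * (s / s₀ * ‖u‖ ^ 2) + 2 * (s / s₀ * ‖uh‖ ^ 2) := by
          gcongr <;> exact le_mul_of_one_le_left (sq_nonneg _) hss
      _ = 2 * ‖ξ‖ ^ 2 / s₀ * (s * ‖u‖ ^ 2) + 2 / s₀ * (s * ‖uh‖ ^ 2) := by ring
  have : 2 / s₀ * (s * ‖uh‖ ^ 2) ≤ 2 / s₀ * (s * ‖uh‖ ^ 2 + ‖vh‖ ^ 2) := by
    gcongr; exact le_add_of_nonneg_right (sq_nonneg _)
  have : 0 ≤ 2 * ‖ξ‖ ^ 2 / s₀ := by positivity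
  nlinarith

lemma memLp_two_iff_lintegral_ofReal_sq_lt_top {E : Type*} [NormedAddCommGroup E]
    {μ : Measure Ω} {w : Ω → E} (hw : AEStronglyMeasurable w μ) :
    MemLp w 2 μ ↔ ∫⁻ ω, ENNReal.ofReal (‖w ω‖ ^ 2) ∂μ < ⊤ := by
  rw [memLp_two_iff_integrable_sq_norm hw, Integrable,
    hasFiniteIntegral_iff_ofReal (ae_of_all _ fun _ => sq_nonneg _)]
  exact and_iff_right (hw.norm.pow 2)

section Model

variable {μ : Measure Ω} {a : Ω → ℝ}

lemma ofReal_mul_lintegral_sq_le_aInt {s₀ : ℝ} (hs₀ : 0 ≤ s₀) (hlb : ∀ᵐ ω ∂μ, s₀ ≤ a ω)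
    (u : Ω → ℂ) : ENNReal.ofReal s₀ * ∫⁻ ω, ENNReal.ofReal (‖u ω‖ ^ 2) ∂μ ≤ aInt μ a u := by
  rw [← lintegral_const_mul' _ _ ENNReal.ofReal_ne_top]
  refine lintegral_mono_ae (hlb.mono fun ω hω => ?_)
  rw [← ENNReal.ofReal_mul hs₀]
  gcongr

lemma memH1_of_aInt_lt_top {s₀ : ℝ} (hs₀ : 0 < s₀) (hlb : ∀ᵐ ω ∂μ, s₀ ≤ a ω) {u : Ω → ℂ}
    (hu : AEStronglyMeasurable u μ) (h : aInt μ a u < ⊤) : memH1 μ a u := by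
  refine ⟨(memLp_two_iff_lintegral_ofReal_sq_lt_top hu).mpr ?_, h⟩
  exact ENNReal.lt_top_of_mul_ne_top_right
    ((ofReal_mul_lintegral_sq_le_aInt hs₀.le hlb u).trans_lt h).ne
    (ENNReal.ofReal_pos.mpr hs₀).ne'

lemma memH1.const_mul_sub (ha : AEMeasurable a μ) {u w : Ω → ℂ} (hu : memH1 μ a u)
    (hw : memH1 μ a w) (c : ℂ) : memH1 μ a (fun ω => c * u ω - w ω) := by
  refine ⟨(hu.1.const_mul c).sub hw.1, ?_⟩
  have hpt : ∀ ω, ENNReal.ofReal (a ω * ‖c * u ω - w ω‖ ^ 2) ≤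
      ENNReal.ofReal (2 * ‖c‖ ^ 2) * ENNReal.ofReal (a ω * ‖u ω‖ ^ 2) +
        ENNReal.ofReal 2 * ENNReal.ofReal (a ω * ‖w ω‖ ^ 2) := by
    intro ω
    rcases lt_or_ge (a ω) 0 with hneg | hnn
    · rw [ENNReal.ofReal_of_nonpos (mul_nonpos_of_nonpos_of_nonneg hneg.le (sq_nonneg _))]
      exact zero_le
    rw [← ENNReal.ofReal_mul (by positivity), ← ENNReal.ofReal_mul (by positivity),
      ← ENNReal.ofReal_add (by positivity) (by positivity)]
    gcongr
    have hnorm : ‖c * u ω - w ω‖ ≤ ‖c‖ * ‖u ω‖ + ‖w ω‖ := by grw [norm_sub_le, norm_mul]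
    have : ‖c * u ω - w ω‖ ^ 2 ≤ 2 * ‖c‖ ^ 2 * ‖u ω‖ ^ 2 + 2 * ‖w ω‖ ^ 2 := by
      nlinarith [norm_nonneg (c * u ω - w ω), sq_nonneg (‖c‖ * ‖u ω‖ - ‖w ω‖)]
    nlinarith [mul_le_mul_of_nonneg_left this hnn]
  have hmeas : AEMeasurable (fun ω => ENNReal.ofReal (a ω * ‖u ω‖ ^ 2)) μ :=
    (ha.mul (hu.1.aestronglyMeasurable.norm.aemeasurable.pow_const 2)).ennreal_ofReal
  calc aInt μ a (fun ω => c * u ω - w ω)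
      ≤ ∫⁻ ω, (ENNReal.ofReal (2 * ‖c‖ ^ 2) * ENNReal.ofReal (a ω * ‖u ω‖ ^ 2) +
          ENNReal.ofReal 2 * ENNReal.ofReal (a ω * ‖w ω‖ ^ 2)) ∂μ := lintegral_mono hpt
    _ = ENNReal.ofReal (2 * ‖c‖ ^ 2) * aInt μ a u + ENNReal.ofReal 2 * aInt μ a w := by
        rw [lintegral_add_left' (hmeas.const_mul _), lintegral_const_mul' _ _ ENNReal.ofReal_ne_top,
          lintegral_const_mul' _ _ ENNReal.ofReal_ne_top, aInt, aInt]
    _ < ⊤ := by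
        have := hu.2; have := hw.2
        finiteness

lemma hsq_le_of_ae_le (ha : AEMeasurable a μ) (ha0 : ∀ᵐ ω ∂μ, 0 ≤ a ω) {K : ℝ} (hK : 0 ≤ K)
    {u v uh vh : Ω → ℂ} (huh : AEStronglyMeasurable uh μ)
    (h : ∀ᵐ ω ∂μ, a ω * ‖u ω‖ ^ 2 + ‖v ω‖ ^ 2 ≤ K * (a ω * ‖uh ω‖ ^ 2 + ‖vh ω‖ ^ 2)) :
    hsq μ a u v ≤ ENNReal.ofReal K * hsq μ a uh vh := by
  have hmeas : AEMeasurable (fun ω => ENNReal.ofReal (a ω * ‖uh ω‖ ^ 2)) μ :=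
    (ha.mul (huh.norm.aemeasurable.pow_const 2)).ennreal_ofReal
  rw [hsq, hsq, aInt, aInt, ← lintegral_add_left' hmeas,
    ← lintegral_const_mul' _ _ ENNReal.ofReal_ne_top]
  refine (le_lintegral_add _ _).trans (lintegral_mono_ae ?_)
  filter_upwards [h, ha0] with ω hω ha0
  rw [← ENNReal.ofReal_add (by positivity) (by positivity),
    ← ENNReal.ofReal_add (by positivity) (by positivity), ← ENNReal.ofReal_mul hK]
  exact ENNReal.ofReal_le_ofReal hω

lemma hsq_zero_indicator_one {F : Set Ω} (hF : MeasurableSet F) :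
    hsq μ a (fun _ => 0) (F.indicator fun _ => 1) = μ F := by
  have h : (fun ω => ENNReal.ofReal (‖F.indicator (fun _ => (1 : ℂ)) ω‖ ^ 2)) =
      F.indicator fun _ => 1 := by
    ext ω
    by_cases hω : ω ∈ F <;> simp [hω]
  rw [hsq, h, lintegral_indicator hF]
  simp [aInt]

lemma aemeasurable_comp_of_continuousOn {f : ℝ → ℝ} {σS : Set ℝ} (hσ : MeasurableSet σS)
    (hfc : ContinuousOn f σS) (ha : Measurable a) (hmem : ∀ᵐ ω ∂μ, a ω ∈ σS) :
    AEMeasurable (fun ω => f (a ω)) μ := by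
  classical
  refine ((hfc.measurable_piecewise (continuousOn_const (c := 0)) hσ).comp ha).aemeasurable.congr ?_
  filter_upwards [hmem] with ω hω
  exact σS.piecewise_eq_of_mem _ _ hω

lemma ae_eq_of_resolvent_eq {f : ℝ → ℝ} {σS : Set ℝ} {ξ : ℂ} (hmem : ∀ᵐ ω ∂μ, a ω ∈ σS)
    (hroot : ∀ s ∈ σS, symbol f ξ s ≠ 0) {u v u' v' uh vh : Ω → ℂ}
    (h₁ : (fun ω => ξ * u ω - v ω) =ᵐ[μ] uh)
    (h₂ : (fun ω => ξ * v ω + ((a ω : ℂ) * u ω + (f (a ω) : ℂ) * v ω)) =ᵐ[μ] vh)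
    (h₁' : (fun ω => ξ * u' ω - v' ω) =ᵐ[μ] uh)
    (h₂' : (fun ω => ξ * v' ω + ((a ω : ℂ) * u' ω + (f (a ω) : ℂ) * v' ω)) =ᵐ[μ] vh) :
    u =ᵐ[μ] u' ∧ v =ᵐ[μ] v' := by
  have hu : u =ᵐ[μ] u' := by
    filter_upwards [h₁, h₂, h₁', h₂', hmem] with ω h₁ h₂ h₁' h₂' hω
    exact mul_left_cancel₀ (hroot _ hω)
      (((symbol_mul_eq_iff h₁).mp h₂).trans ((symbol_mul_eq_iff h₁').mp h₂').symm)
  refine ⟨hu, ?_⟩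
  filter_upwards [h₁, h₁', hu] with ω h₁ h₁' hu
  linear_combination h₁' - h₁ + ξ * hu

lemma resSet_of_forall_symbol_ne_zero {f : ℝ → ℝ} {σS : Set ℝ} {s₀ : ℝ} {ξ : ℂ}
    (ha : Measurable a) (hcl : IsClosed σS) (hs₀ : 0 < s₀)
    (hlb : ∀ s ∈ σS, s₀ ≤ s) (hmem : ∀ᵐ ω ∂μ, a ω ∈ σS) (hfc : ContinuousOn f σS)
    (hre : ξ.re = 0) (hξ : ξ ≠ 0) (hroot : ∀ s ∈ σS, symbol f ξ s ≠ 0) : resSet μ a f ξ := by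
  obtain ⟨c, hc, hcs⟩ := exists_pos_mul_le_norm_symbol_sq hcl hfc hre hroot
  have hg : AEMeasurable (fun ω => (f (a ω) : ℂ)) μ := measurable_ofReal.comp_aemeasurable
    (aemeasurable_comp_of_continuousOn hcl.measurableSet hfc ha hmem)
  have has₀ : ∀ᵐ ω ∂μ, s₀ ≤ a ω := hmem.mono fun ω hω => hlb _ hω
  set K := 3 * (1 / c + ‖ξ‖ ^ 2 / (c * s₀) + 1 / ‖ξ‖ ^ 2) * (1 + 2 * ‖ξ‖ ^ 2 / s₀) + 2 / s₀
  refine ⟨K, fun uh vh huh hvh => ?_⟩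
  set u : Ω → ℂ := fun ω => (vh ω + (ξ + f (a ω)) * uh ω) / symbol f ξ (a ω) with hu_def
  set v : Ω → ℂ := fun ω => ξ * u ω - uh ω
  have hsol : ∀ᵐ ω ∂μ, symbol f ξ (a ω) * u ω = vh ω + (ξ + f (a ω)) * uh ω :=
    hmem.mono fun ω hω => mul_div_cancel₀ _ (hroot _ hω)
  have hum : AEMeasurable u μ := by
    have := huh.1.aestronglyMeasurable.aemeasurable
    have := hvh.aestronglyMeasurable.aemeasurable
    simp only [hu_def, symbol]
    fun_prop
  have hbound := hsq_le_of_ae_le (K := K) (u := u) (v := v) (vh := vh) ha.aemeasurable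
    (has₀.mono fun ω h => hs₀.le.trans h) (by positivity) huh.1.aestronglyMeasurable
    (by filter_upwards [hsol, hmem] with ω h hω
        exact norm_resolvent_sq_le hre hξ hc hs₀ (hlb _ hω) (hcs _ hω) h)
  have hfin : hsq μ a uh vh < ⊤ := ENNReal.add_lt_top.mpr
    ⟨huh.2, (memLp_two_iff_lintegral_ofReal_sq_lt_top hvh.aestronglyMeasurable).mp hvh⟩
  have hu : memH1 μ a u := memH1_of_aInt_lt_top hs₀ has₀ hum.aestronglyMeasurable
    ((le_self_add.trans hbound).trans_lt (ENNReal.mul_lt_top ENNReal.ofReal_lt_top hfin))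
  have hv : memH1 μ a v := hu.const_mul_sub ha.aemeasurable huh ξ
  have heq₂ : (fun ω => ξ * v ω + ((a ω : ℂ) * u ω + (f (a ω) : ℂ) * v ω)) =ᵐ[μ] vh :=
    hsol.mono fun ω h => (symbol_mul_eq_iff (sub_sub_cancel _ _)).mpr h
  refine ⟨u, v, ⟨hu, hv, ?_⟩, .of_forall fun ω => sub_sub_cancel _ _, heq₂, hbound,
    fun u' v' _ heq₁' heq₂' => ?_⟩
  · refine (hvh.sub (hv.1.const_mul ξ)).ae_eq ?_
    filter_upwards [heq₂] with ω h
    rw [Pi.sub_apply, ← h]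
    ring
  · exact ae_eq_of_resolvent_eq hmem hroot heq₁' heq₂' (.of_forall fun ω => sub_sub_cancel _ _) heq₂

lemma not_resSet_of_symbol_eq_zero [SigmaFinite μ] {f : ℝ → ℝ} {σS : Set ℝ} {s₁ : ℝ} {ξ : ℂ}
    (ha : Measurable a) (hmem : ∀ᵐ ω ∂μ, a ω ∈ σS)
    (hmin : ∀ ε > 0, μ {ω | |a ω - s₁| < ε} ≠ 0) (hfc : ContinuousWithinAt f σS s₁)
    (hξ : ξ ≠ 0) (hroot : symbol f ξ s₁ = 0) : ¬ resSet μ a f ξ := by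
  rintro ⟨C, hC⟩
  set β := ‖ξ‖ / (|C| + 1)
  have hβ : 0 < β := by positivity
  obtain ⟨ε, hε, hsmall⟩ := Metric.continuousWithinAt_iff.mp (hfc.symbol (ξ := ξ)) β hβ
  obtain ⟨F, hFm, hFsub, hFpos, hFfin⟩ := Measure.exists_subset_measure_lt_top
    (measurableSet_lt ((ha.sub_const s₁).abs) measurable_const) (pos_iff_ne_zero.mpr (hmin ε hε))
  obtain ⟨u, v, -, heq₁, heq₂, hbound, -⟩ := hC (fun _ => 0) (F.indicator fun _ => 1)
    ⟨MemLp.zero, by simp [aInt]⟩ (memLp_indicator_const 2 hFm 1 (Or.inr hFfin.ne))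
  have hlarge : ∀ᵐ ω ∂μ, ω ∈ F → ENNReal.ofReal ((|C| + 1) ^ 2) ≤ ENNReal.ofReal (‖v ω‖ ^ 2) := by
    filter_upwards [heq₁, heq₂, hmem] with ω h₁ h₂ hω hωF
    have hp : symbol f ξ (a ω) * u ω = 1 := by
      simpa [hωF, hroot] using (symbol_mul_eq_iff h₁).mp h₂
    have hp_small : ‖symbol f ξ (a ω)‖ < β := by
      simpa [hroot, Real.dist_eq] using hsmall hω (hFsub hωF)
    have hv : v ω = ξ * u ω := by linear_combination -h₁
    have hp_norm : ‖symbol f ξ (a ω)‖ * ‖u ω‖ = 1 := by rw [← norm_mul, hp, norm_one]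
    have : |C| + 1 ≤ ‖v ω‖ :=
      calc |C| + 1 = (|C| + 1) * ‖symbol f ξ (a ω)‖ * ‖u ω‖ := by rw [mul_assoc, hp_norm, mul_one]
        _ ≤ ‖ξ‖ * ‖u ω‖ := by
            gcongr
            exact ((lt_div_iff₀' (by positivity)).mp hp_small).le
        _ = ‖v ω‖ := by rw [hv, norm_mul]
    gcongr
  have key : ENNReal.ofReal ((|C| + 1) ^ 2) * μ F ≤ ENNReal.ofReal C * μ F :=
    calc ENNReal.ofReal ((|C| + 1) ^ 2) * μ F = ∫⁻ _ in F, ENNReal.ofReal ((|C| + 1) ^ 2) ∂μ :=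
          (setLIntegral_const F _).symm
      _ ≤ ∫⁻ ω in F, ENNReal.ofReal (‖v ω‖ ^ 2) ∂μ := setLIntegral_mono_ae' hFm hlarge
      _ ≤ ∫⁻ ω, ENNReal.ofReal (‖v ω‖ ^ 2) ∂μ := setLIntegral_le_lintegral F _
      _ ≤ hsq μ a u v := le_add_self
      _ ≤ ENNReal.ofReal C * hsq μ a (fun _ => 0) (F.indicator fun _ => 1) := hbound
      _ = ENNReal.ofReal C * μ F := by rw [hsq_zero_indicator_one hFm]
  have := ENNReal.ofReal_le_ofReal_iff'.mp ((ENNReal.mul_le_mul_iff_left hFpos.ne' hFfin.ne).mp key)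
  rcases this with h | h <;> nlinarith [le_abs_self C, abs_nonneg C]

end Model

theorem spectrum_on_imaginary_axis_general
    (μ : Measure Ω) [SigmaFinite μ] (a : Ω → ℝ) (ha : Measurable a)
    (σS : Set ℝ) (hcl : IsClosed σS)
    (s₀ : ℝ) (hs₀ : 0 < s₀) (hlb : ∀ s ∈ σS, s₀ ≤ s)
    (hmem : ∀ᵐ ω ∂μ, a ω ∈ σS)
    (hmin : ∀ s ∈ σS, ∀ ε > 0, μ {ω | |a ω - s| < ε} ≠ 0)
    (f : ℝ → ℝ) (hfc : ContinuousOn f σS) :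
    ({ξ : ℂ | ¬ resSet μ a f ξ} \ {0}) ∩ {ξ : ℂ | ξ.re = 0} =
      {ξ : ℂ | ∃ s ∈ σS, f s = 0 ∧
        (ξ = Complex.I * ((Real.sqrt s : ℝ) : ℂ) ∨
          ξ = -(Complex.I * ((Real.sqrt s : ℝ) : ℂ)))} := by
  have hpos : ∀ s ∈ σS, 0 < s := fun s hs => hs₀.trans_le (hlb s hs)
  ext ξ
  simp only [mem_inter_iff, Set.mem_sdiff, mem_ofPred_eq, mem_singleton_iff]
  constructor
  · rintro ⟨⟨hspec, hξ⟩, hre⟩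
    by_contra hnot
    refine hspec (resSet_of_forall_symbol_ne_zero ha hcl hs₀ hlb hmem hfc hre hξ fun s hs h => ?_)
    obtain ⟨hfs, hsq⟩ := (symbol_eq_zero_iff hre hξ).mp h
    exact hnot ⟨s, hs, hfs, (sq_eq_neg_ofReal_iff (hpos s hs).le).mp hsq⟩
  · rintro ⟨s, hs, hfs, hroots⟩
    have hsq : ξ ^ 2 = -(s : ℂ) := (sq_eq_neg_ofReal_iff (hpos s hs).le).mpr hroots
    have hξ : ξ ≠ 0 := by
      rintro rfl
      simp [eq_comm, (hpos s hs).ne'] at hsq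
    have hre : ξ.re = 0 := by rcases hroots with rfl | rfl <;> simp
    refine ⟨⟨not_resSet_of_symbol_eq_zero ha hmem (hmin s hs) (hfc s hs) hξ ?_, hξ⟩, hre⟩
    simp [symbol, hfs, hsq]

/-- **Corollary (spectrum on the imaginary axis).** In the
multiplication-operator model of the spectral theorem (`A` = multiplication by
`a`, spectrum `σS ⊂ (0,∞)`, `f : σ(A) → [0,∞)` continuous, `𝒜(u,v) =
(v, -Au - f(A)v)`), the intersection of `σ(𝒜) \ {0}` with the imaginary axis
is exactly `⋃_{s ∈ 𝒵} {i√s, -i√s}`, where `𝒵 = {s ∈ σ(A) : f(s) = 0}`. -/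
theorem spectrum_on_imaginary_axis
    (μ : Measure Ω) [SigmaFinite μ] (a : Ω → ℝ) (ha : Measurable a)
    (σS : Set ℝ) (hcl : IsClosed σS) (hne : σS.Nonempty)
    (s₀ : ℝ) (hs₀ : 0 < s₀) (hlb : ∀ s ∈ σS, s₀ ≤ s)
    (hmem : ∀ᵐ ω ∂μ, a ω ∈ σS)
    (hmin : ∀ s ∈ σS, ∀ ε > 0, μ {ω | |a ω - s| < ε} ≠ 0)
    (f : ℝ → ℝ) (hfc : ContinuousOn f σS) (hf0 : ∀ s ∈ σS, 0 ≤ f s) :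
    ({ξ : ℂ | ¬ resSet μ a f ξ} \ {0}) ∩ {ξ : ℂ | ξ.re = 0} =
      {ξ : ℂ | ∃ s ∈ σS, f s = 0 ∧
        (ξ = Complex.I * ((Real.sqrt s : ℝ) : ℂ) ∨
          ξ = -(Complex.I * ((Real.sqrt s : ℝ) : ℂ)))} :=
  spectrum_on_imaginary_axis_general μ a ha σS hcl s₀ hs₀ hlb hmem hmin f hfc
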